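/- Let a, γ : [0,∞) → ℝ be continuous and bounded above and below by positive constants, and let k > 0. Let p, z : [0,∞) → ℝ be differentiable solutions of z'(t) = a(t)z(t) − z(t)² − kγ(t) with p bounded and z(0) > p(0). Then z(t) > p(t) for all t ≥ 0, the difference v = z − p satisfies v'(t) = (a(t) − 2p(t))v(t) − v(t)², and ∫₀^∞ (z(t) − p(t)) dt = ∞ if and only if ∫₀^∞ exp(∫₀^t (a(s) − 2p(s)) ds) dt = ∞. -/

import Mathlib

open Real Filter MeasureTheory Set intervalIntegral

/-!
The difference `v = z - p` of two solutions satisfies the Bernoulli equation `v' = g v - v²`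
with `g = a - 2p`. Writing it as `v' = (g - v) v` shows that `v · exp (-∫₀ᵗ (g - v))` is
constant, so `v` keeps the sign of `v 0`. The substitution `w = 1 / v` linearizes it to
`w' = -g w + 1`, whence `exp (∫₀ᵗ g) / v t = 1 / v 0 + F t` with `F t = ∫₀ᵗ exp (∫₀ˢ g)`.
Since `F' = exp (∫₀ᵗ g)`, this says `v = (log (1 + v 0 * F))'`, so
`∫₀ᵀ v = log (1 + v 0 * F T)`, which diverges exactly when `F T` does.
-/

lemma eq_of_hasDerivWithinAt_Ici_zero {f : ℝ → ℝ} {x₀ : ℝ}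
    (hf : ∀ t ≥ x₀, HasDerivWithinAt f 0 (Ici x₀) t) {t : ℝ} (ht : x₀ ≤ t) : f t = f x₀ :=
  constant_of_has_deriv_right_zero
    (fun x hx => (hf x hx.1).continuousWithinAt.mono Icc_subset_Ici_self)
    (fun x hx => (hf x hx.1).mono (Ici_subset_Ici.2 hx.1)) t ⟨ht, le_rfl⟩

lemma hasDerivWithinAt_integral_Ici {f : ℝ → ℝ} {x₀ t : ℝ} (hf : ContinuousOn f (Ici x₀))
    (ht : x₀ ≤ t) : HasDerivWithinAt (fun u => ∫ x in x₀..u, f x) (f t) (Ici x₀) t := by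
  have : Fact (t ∈ Icc x₀ (t + 1)) := ⟨⟨ht, by linarith⟩⟩
  have hf' : ContinuousOn f (Icc x₀ (t + 1)) := hf.mono Icc_subset_Ici_self
  have hderiv : HasDerivWithinAt (fun u => ∫ x in x₀..u, f x) (f t) (Icc x₀ (t + 1)) t :=
    integral_hasDerivWithinAt_right ((hf.mono Icc_subset_Ici_self).intervalIntegrable_of_Icc ht)
      (hf'.stronglyMeasurableAtFilter_nhdsWithin measurableSet_Icc t) (hf' t this.out)
  refine hderiv.mono_of_mem_nhdsWithin ?_
  rw [← Ici_inter_Iic]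
  exact inter_mem_nhdsWithin _ (Iic_mem_nhds (by linarith))

lemma Real.tendsto_log_one_add_mul_atTop_iff {α : Type*} {l : Filter α} {f : α → ℝ} {c : ℝ}
    (hc : 0 < c) (hf : ∀ᶠ x in l, 0 ≤ f x) :
    Tendsto (fun x => log (1 + c * f x)) l atTop ↔ Tendsto f l atTop := by
  rw [← tendsto_const_mul_atTop_of_pos hc (f := f)]
  refine ⟨fun h => tendsto_atTop_mono' l ?_ h, fun h => ?_⟩
  · filter_upwards [hf] with x hx
    linarith [log_le_sub_one_of_pos (by positivity : 0 < 1 + c * f x)]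
  · exact tendsto_log_atTop.comp (tendsto_atTop_add_const_left l 1 h)

lemma HasDerivWithinAt.sub_of_logistic {z p : ℝ → ℝ} {a c z' p' t : ℝ} {s : Set ℝ}
    (hz : HasDerivWithinAt z z' s t) (hp : HasDerivWithinAt p p' s t)
    (hz' : z' = a * z t - z t ^ 2 - c) (hp' : p' = a * p t - p t ^ 2 - c) :
    HasDerivWithinAt (fun t => z t - p t) ((a - 2 * p t) * (z t - p t) - (z t - p t) ^ 2) s t :=
  (hz.sub hp).congr_deriv (by rw [hz', hp']; ring)

section Bernoulli

variable {g v : ℝ → ℝ} (hg : ContinuousOn g (Ici 0))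
  (hv : ∀ t ≥ (0 : ℝ), HasDerivWithinAt v (g t * v t - v t ^ 2) (Ici 0) t) (hv0 : 0 < v 0)
include hg hv hv0

lemma pos_of_bernoulli {t : ℝ} (ht : 0 ≤ t) : 0 < v t := by
  have hvc : ContinuousOn v (Ici 0) := fun x hx => (hv x hx).continuousWithinAt
  set B : ℝ → ℝ := fun u => ∫ x in (0 : ℝ)..u, g x - v x
  have hconst : v t * exp (-B t) = v 0 * exp (-B 0) := by
    refine eq_of_hasDerivWithinAt_Ici_zero (f := fun u => v u * exp (-B u)) (fun x hx => ?_) ht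
    have hB : HasDerivWithinAt B (g x - v x) (Ici 0) x :=
      hasDerivWithinAt_integral_Ici (hg.sub hvc) hx
    exact ((hv x hx).mul hB.neg.exp).congr_deriv (by ring)
  simp only [B, integral_same, neg_zero, exp_zero, mul_one] at hconst
  exact (mul_pos_iff_of_pos_right (exp_pos _)).1 (hconst ▸ hv0)

lemma exp_integral_div_sub_integral_of_bernoulli {t : ℝ} (ht : 0 ≤ t) :
    exp (∫ s in (0 : ℝ)..t, g s) / v t - ∫ s in (0 : ℝ)..t, exp (∫ r in (0 : ℝ)..s, g r)
      = (v 0)⁻¹ := by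
  have hA (x : ℝ) (hx : 0 ≤ x) :
      HasDerivWithinAt (fun u => ∫ r in (0 : ℝ)..u, g r) (g x) (Ici 0) x :=
    hasDerivWithinAt_integral_Ici hg hx
  have hE : ContinuousOn (fun u => exp (∫ r in (0 : ℝ)..u, g r)) (Ici 0) :=
    fun x hx => (hA x hx).continuousWithinAt.rexp
  refine (eq_of_hasDerivWithinAt_Ici_zero (f := fun u => exp (∫ r in (0 : ℝ)..u, g r) / v u -
    ∫ s in (0 : ℝ)..u, exp (∫ r in (0 : ℝ)..s, g r)) (fun x hx => ?_) ht).trans (by simp)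
  have hvx := (pos_of_bernoulli hg hv hv0 hx).ne'
  exact (((hA x hx).exp.div (hv x hx) hvx).sub (hasDerivWithinAt_integral_Ici hE hx)).congr_deriv
    (by field_simp; ring)

lemma integral_eq_log_of_bernoulli {T : ℝ} (hT : 0 ≤ T) :
    ∫ s in (0 : ℝ)..T, v s = log (1 + v 0 * ∫ s in (0 : ℝ)..T, exp (∫ r in (0 : ℝ)..s, g r)) := by
  set F : ℝ → ℝ := fun u => ∫ s in (0 : ℝ)..u, exp (∫ r in (0 : ℝ)..s, g r)
  have hvc : ContinuousOn v (Ici 0) := fun x hx => (hv x hx).continuousWithinAt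
  have hE : ContinuousOn (fun u => exp (∫ r in (0 : ℝ)..u, g r)) (Ici 0) :=
    fun x hx => (hasDerivWithinAt_integral_Ici hg hx).continuousWithinAt.rexp
  suffices (∫ s in (0 : ℝ)..T, v s) - log (1 + v 0 * F T) = 0 by linarith
  refine (eq_of_hasDerivWithinAt_Ici_zero (f := fun u => (∫ s in (0 : ℝ)..u, v s) -
    log (1 + v 0 * F u)) (fun x hx => ?_) hT).trans (by simp [F])
  have hvx := pos_of_bernoulli hg hv hv0 hx
  have hlin : 1 + v 0 * F x = v 0 * exp (∫ r in (0 : ℝ)..x, g r) / v x := by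
    have := exp_integral_div_sub_integral_of_bernoulli hg hv hv0 hx
    field_simp at this ⊢
    linarith
  have hpos : 0 < 1 + v 0 * F x := by rw [hlin]; positivity
  have hF := ((hasDerivWithinAt_integral_Ici hE hx).const_mul (v 0)).const_add 1
  refine ((hasDerivWithinAt_integral_Ici hvc hx).sub (hF.log hpos.ne')).congr_deriv ?_
  rw [hlin]
  field_simp
  ring

end Bernoulli

theorem stmt8_general (a γ p z : ℝ → ℝ) (k : ℝ)
    (ha : ContinuousOn a (Set.Ici (0:ℝ)))
    (hp : ∀ t ≥ (0:ℝ), HasDerivWithinAt p (a t * p t - p t ^ 2 - k * γ t) (Set.Ici (0:ℝ)) t)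
    (hz : ∀ t ≥ (0:ℝ), HasDerivWithinAt z (a t * z t - z t ^ 2 - k * γ t) (Set.Ici (0:ℝ)) t)
    (h0 : z 0 > p 0) :
    (∀ t ≥ (0:ℝ), z t > p t) ∧
    (∀ t ≥ (0:ℝ), HasDerivWithinAt (fun t => z t - p t)
      ((a t - 2 * p t) * (z t - p t) - (z t - p t) ^ 2) (Set.Ici (0:ℝ)) t) ∧
    (Tendsto (fun T => ∫ t in (0:ℝ)..T, z t - p t) atTop atTop ↔
      Tendsto (fun T => ∫ t in (0:ℝ)..T, Real.exp (∫ s in (0:ℝ)..t, a s - 2 * p s))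
        atTop atTop) := by
  have hv (t : ℝ) (ht : 0 ≤ t) := (hz t ht).sub_of_logistic (hp t ht) rfl rfl
  have hg : ContinuousOn (fun t => a t - 2 * p t) (Ici 0) :=
    ha.sub (continuousOn_const.mul fun t ht => (hp t ht).continuousWithinAt)
  have hv0 : 0 < z 0 - p 0 := sub_pos.2 h0
  refine ⟨fun t ht => sub_pos.1 (pos_of_bernoulli hg hv hv0 ht), hv, ?_⟩
  have hlog : ∀ᶠ T in atTop, ∫ t in (0:ℝ)..T, z t - p t =
      log (1 + (z 0 - p 0) * ∫ t in (0:ℝ)..T, exp (∫ s in (0:ℝ)..t, a s - 2 * p s)) :=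
    eventually_atTop.2 ⟨0, fun T hT => integral_eq_log_of_bernoulli hg hv hv0 hT⟩
  rw [tendsto_congr' hlog, tendsto_log_one_add_mul_atTop_iff hv0]
  filter_upwards [eventually_ge_atTop 0] with T hT
  exact integral_nonneg hT fun s _ => (exp_pos _).le

theorem stmt8 (a γ p z : ℝ → ℝ) (k a₁ a₂ γ₁ γ₂ : ℝ)
    (ha : ContinuousOn a (Set.Ici (0:ℝ)))
    (hγ : ContinuousOn γ (Set.Ici (0:ℝ)))
    (ha₁ : 0 < a₁) (hγ₁ : 0 < γ₁)
    (haB : ∀ t ≥ (0:ℝ), a₁ ≤ a t ∧ a t ≤ a₂)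
    (hγB : ∀ t ≥ (0:ℝ), γ₁ ≤ γ t ∧ γ t ≤ γ₂)
    (hk : 0 < k)
    (hp : ∀ t ≥ (0:ℝ), HasDerivWithinAt p (a t * p t - p t ^ 2 - k * γ t) (Set.Ici (0:ℝ)) t)
    (hz : ∀ t ≥ (0:ℝ), HasDerivWithinAt z (a t * z t - z t ^ 2 - k * γ t) (Set.Ici (0:ℝ)) t)
    (hpbd : ∃ M : ℝ, ∀ t ≥ (0:ℝ), |p t| ≤ M)
    (h0 : z 0 > p 0) :
    (∀ t ≥ (0:ℝ), z t > p t) ∧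
    (∀ t ≥ (0:ℝ), HasDerivWithinAt (fun t => z t - p t)
      ((a t - 2 * p t) * (z t - p t) - (z t - p t) ^ 2) (Set.Ici (0:ℝ)) t) ∧
    (Tendsto (fun T => ∫ t in (0:ℝ)..T, z t - p t) atTop atTop ↔
      Tendsto (fun T => ∫ t in (0:ℝ)..T, Real.exp (∫ s in (0:ℝ)..t, a s - 2 * p s))
        atTop atTop) :=
  stmt8_general a γ p z k ha hp hz h0
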